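/- Let a, b ∈ ℝ with b ≥ 2. Then every non-real root z of Φ(a, b, ·) satisfies |z| > √(b(b−2)). -/

import Mathlib

open Complex

/-- The Kummer confluent hypergeometric function `Φ(a, b, z)`. -/
noncomputable def kummerPhi (a b z : ℂ) : ℂ :=
  ∑' k : ℕ, ((ascPochhammer ℂ k).eval a / (ascPochhammer ℂ k).eval b) * z ^ k /
    (Nat.factorial k)

/-!
On the segment `s ↦ s z`, `s ∈ [0, 1]`, the function `u(s) = e^{-sz/2} Φ(a, b, sz)` solves
`s u'' + b u' = (z² s / 4 + (a - b / 2) z) u`, with `u(0) = 1` and `u(1) = 0`. For `U = s^{b/2} u`,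
`(U' Ū)' = U'' Ū + |U'|²`. Integrating the real part of `i z̄ (U' Ū)'` over `[0, 1]`, the boundary
terms vanish, the term in `a` drops out, and what is left is `Im z / 4` times
`∫₀¹ s^{b-2} ((b (b - 2) - |z|² s²) |u|² + 4 |b u / 2 + s u'|²) ds`, which must therefore vanish.
If `|z|² ≤ b (b - 2)` the integrand is nonnegative, and positive near `0` because
`b u(0) / 2 + 0 · u'(0) = b / 2 ≠ 0`.
-/

open scoped Nat ComplexConjugate

lemma natCast_mul_pow_pred_le (k : ℕ) {x : ℝ} (hx : 0 ≤ x) :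
    k * x ^ (k - 1) ≤ (2 * (x + 1)) ^ k := by
  rw [mul_pow]
  gcongr
  · exact_mod_cast Nat.lt_two_pow_self.le
  · calc x ^ (k - 1) ≤ (x + 1) ^ (k - 1) := by gcongr; linarith
      _ ≤ (x + 1) ^ k := pow_le_pow_right₀ (by linarith) (Nat.sub_le k 1)

noncomputable def powerSeriesSum (c : ℕ → ℂ) (z : ℂ) : ℂ := ∑' k, c k * z ^ k

def derivCoeff (c : ℕ → ℂ) (k : ℕ) : ℂ := (k + 1) * c (k + 1)

section PowerSeriesSum

variable {c : ℕ → ℂ}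

lemma summable_mul_pow (hc : ∀ r : ℝ, Summable fun k => ‖c k‖ * r ^ k) (z : ℂ) :
    Summable fun k => c k * z ^ k :=
  .of_norm_bounded (hc ‖z‖) fun k => by rw [norm_mul, norm_pow]

lemma hasSum_powerSeriesSum (hc : ∀ r : ℝ, Summable fun k => ‖c k‖ * r ^ k) (z : ℂ) :
    HasSum (fun k => c k * z ^ k) (powerSeriesSum c z) :=
  (summable_mul_pow hc z).hasSum

lemma summable_derivCoeff (hc : ∀ r : ℝ, Summable fun k => ‖c k‖ * r ^ k) (r : ℝ) :
    Summable fun k => ‖derivCoeff c k‖ * r ^ k := by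
  refine .of_norm_bounded ((summable_nat_add_iff 1).2 (hc (2 * (|r| + 1)))) fun k => ?_
  have h := natCast_mul_pow_pred_le (k + 1) (abs_nonneg r)
  have hk : ‖(k : ℂ) + 1‖ = k + 1 := by exact_mod_cast norm_natCast (k + 1)
  rw [Nat.add_sub_cancel] at h
  rw [Real.norm_eq_abs, abs_mul, abs_norm, abs_pow, derivCoeff, norm_mul, hk]
  push_cast at h
  calc (k + 1) * ‖c (k + 1)‖ * |r| ^ k = ‖c (k + 1)‖ * ((k + 1) * |r| ^ k) := by ring
    _ ≤ ‖c (k + 1)‖ * (2 * (|r| + 1)) ^ (k + 1) := by gcongr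

lemma hasDerivAt_powerSeriesSum (hc : ∀ r : ℝ, Summable fun k => ‖c k‖ * r ^ k) (z : ℂ) :
    HasDerivAt (powerSeriesSum c) (powerSeriesSum (derivCoeff c) z) z := by
  set R := ‖z‖ + 1
  have hbound : ∀ k, ∀ w ∈ Metric.ball (0 : ℂ) R,
      ‖c k * (k * w ^ (k - 1))‖ ≤ ‖c k‖ * (2 * (R + 1)) ^ k := by
    intro k w hw
    rw [mem_ball_zero_iff] at hw
    rw [norm_mul, norm_mul, norm_pow, norm_natCast]
    gcongr
    calc (k : ℝ) * ‖w‖ ^ (k - 1) ≤ (2 * (‖w‖ + 1)) ^ k :=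
          natCast_mul_pow_pred_le k (norm_nonneg w)
      _ ≤ (2 * (R + 1)) ^ k := by gcongr
  have hR : ∀ w : ℂ, ‖w‖ < R → w ∈ Metric.ball (0 : ℂ) R :=
    fun w hw => mem_ball_zero_iff.2 hw
  have hderiv := hasDerivAt_tsum_of_isPreconnected (hc (2 * (R + 1))) Metric.isOpen_ball
    (convex_ball (0 : ℂ) R).isPreconnected (fun k w _ => (hasDerivAt_pow k w).const_mul (c k))
    hbound (hR 0 (by simp [R]; positivity)) (summable_mul_pow hc 0) (hR z (by simp [R]))
  have hsum : Summable fun k => c k * (k * z ^ (k - 1)) :=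
    .of_norm_bounded (hc (2 * (R + 1))) fun k => hbound k z (hR z (by simp [R]))
  rw [hsum.tsum_eq_zero_add] at hderiv
  refine hderiv.congr_deriv ?_
  simp only [powerSeriesSum, derivCoeff, Nat.cast_zero, zero_mul, mul_zero, zero_add,
    Nat.add_sub_cancel]
  push_cast
  exact tsum_congr fun k => by ring

lemma deriv_powerSeriesSum (hc : ∀ r : ℝ, Summable fun k => ‖c k‖ * r ^ k) :
    deriv (powerSeriesSum c) = powerSeriesSum (derivCoeff c) :=
  funext fun z => (hasDerivAt_powerSeriesSum hc z).deriv

lemma hasSum_natCast_mul (hc : ∀ r : ℝ, Summable fun k => ‖c k‖ * r ^ k) (z : ℂ) :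
    HasSum (fun k => k * c k * z ^ k) (z * powerSeriesSum (derivCoeff c) z) := by
  rw [← hasSum_nat_add_iff' 1]
  simpa [powerSeriesSum, derivCoeff, pow_succ, mul_comm, mul_left_comm, mul_assoc] using
    (hasSum_powerSeriesSum (summable_derivCoeff hc) z).mul_left z

end PowerSeriesSum

noncomputable def kummerCoeff (a b : ℂ) (k : ℕ) : ℂ :=
  (ascPochhammer ℂ k).eval a / (ascPochhammer ℂ k).eval b / k !

lemma kummerPhi_eq_powerSeriesSum (a b : ℂ) :
    kummerPhi a b = powerSeriesSum (kummerCoeff a b) :=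
  funext fun _ => tsum_congr fun k => by simp only [kummerCoeff]; ring

lemma kummerPhi_zero (a b : ℂ) : kummerPhi a b 0 = 1 := by
  rw [kummerPhi, tsum_eq_single 0 fun k hk => by simp [hk]]
  simp

lemma kummerCoeff_succ (a : ℂ) {b : ℂ} {k : ℕ} (hbk : b + k ≠ 0) :
    (b + k) * derivCoeff (kummerCoeff a b) k = (a + k) * kummerCoeff a b k := by
  simp only [derivCoeff, kummerCoeff, ascPochhammer_succ_eval, Nat.factorial_succ]
  by_cases hP : (ascPochhammer ℂ k).eval b = 0
  · simp [hP]
  · have hk : ((Nat.factorial k : ℕ) : ℂ) ≠ 0 := by exact_mod_cast k.factorial_ne_zero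
    have hk1 : (k : ℂ) + 1 ≠ 0 := by exact_mod_cast k.succ_ne_zero
    push_cast
    field_simp

lemma norm_kummerCoeff_le (a : ℂ) {b : ℝ} (hb : 0 < b) (k : ℕ) :
    ‖kummerCoeff a b k‖ ≤ (1 + ‖a‖ / b) ^ k / k ! := by
  set M := 1 + ‖a‖ / b
  induction k with
  | zero => simp [kummerCoeff]
  | succ k ih =>
    have hbk : 0 < b + k := by positivity
    have hrec := congrArg norm (kummerCoeff_succ a (b := b) (k := k) (by exact_mod_cast hbk.ne'))
    have hnorm_b : ‖(b : ℂ) + k‖ = b + k := by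
      rw [show (b : ℂ) + k = ((b + k : ℝ) : ℂ) by push_cast; ring, norm_real,
        Real.norm_of_nonneg hbk.le]
    have hnorm_k : ‖(k : ℂ) + 1‖ = k + 1 := by exact_mod_cast norm_natCast (k + 1)
    rw [derivCoeff, norm_mul, norm_mul, norm_mul, hnorm_b, hnorm_k] at hrec
    have ha : ‖a + k‖ ≤ M * (b + k) := by
      calc ‖a + k‖ ≤ ‖a‖ + k := by simpa using norm_add_le a k
        _ ≤ M * (b + k) := by
          simp only [M]; field_simp
          nlinarith [norm_nonneg a, mul_nonneg (norm_nonneg a) (Nat.cast_nonneg (α := ℝ) k)]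
    have hfact : (0 : ℝ) < k ! := by exact_mod_cast k.factorial_pos
    rw [le_div_iff₀ (by positivity), Nat.factorial_succ, pow_succ]
    rw [le_div_iff₀ hfact] at ih
    push_cast
    have hstep := mul_le_mul ha ih (by positivity) (by positivity)
    nlinarith [norm_nonneg (kummerCoeff a b (k + 1))]

lemma summable_norm_kummerCoeff_mul_pow (a : ℂ) {b : ℝ} (hb : 0 < b) (r : ℝ) :
    Summable fun k => ‖kummerCoeff a b k‖ * r ^ k := by
  refine .of_norm_bounded (Real.summable_pow_div_factorial ((1 + ‖a‖ / b) * |r|)) fun k => ?_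
  rw [norm_mul, norm_norm, norm_pow, Real.norm_eq_abs, mul_pow, mul_div_right_comm]
  gcongr
  exact norm_kummerCoeff_le a hb k

theorem differentiable_kummerPhi (a : ℂ) {b : ℝ} (hb : 0 < b) :
    Differentiable ℂ (kummerPhi a b) := by
  rw [kummerPhi_eq_powerSeriesSum]
  exact fun z =>
    (hasDerivAt_powerSeriesSum (summable_norm_kummerCoeff_mul_pow a hb) z).differentiableAt

theorem differentiable_deriv_kummerPhi (a : ℂ) {b : ℝ} (hb : 0 < b) :
    Differentiable ℂ (deriv (kummerPhi a b)) := by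
  have hc := summable_norm_kummerCoeff_mul_pow a hb
  rw [kummerPhi_eq_powerSeriesSum, deriv_powerSeriesSum hc]
  exact fun z => (hasDerivAt_powerSeriesSum (summable_derivCoeff hc) z).differentiableAt

theorem kummerPhi_ode (a : ℂ) {b : ℝ} (hb : 0 < b) (z : ℂ) :
    z * deriv (deriv (kummerPhi a b)) z + (b - z) * deriv (kummerPhi a b) z =
      a * kummerPhi a b z := by
  set c := kummerCoeff a b
  have hc := summable_norm_kummerCoeff_mul_pow a hb
  have hc' := summable_derivCoeff hc
  rw [kummerPhi_eq_powerSeriesSum, deriv_powerSeriesSum hc, deriv_powerSeriesSum hc']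
  have hsum := (((hasSum_natCast_mul hc' z).add
    ((hasSum_powerSeriesSum hc' z).mul_left (b : ℂ))).sub (hasSum_natCast_mul hc z)).sub
    ((hasSum_powerSeriesSum hc z).mul_left a)
  have hzero : HasSum (fun k : ℕ => k * derivCoeff c k * z ^ k + b * (derivCoeff c k * z ^ k)
      - k * c k * z ^ k - a * (c k * z ^ k)) 0 := by
    convert hasSum_zero with k
    have hbk : (b : ℂ) + k ≠ 0 := by exact_mod_cast (by positivity : (0 : ℝ) < b + k).ne'
    linear_combination z ^ k * kummerCoeff_succ a hbk
  linear_combination hsum.unique hzero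

lemma hasDerivAt_exp_mul_comp_ofReal_mul {f f' : ℂ → ℂ} (hf : ∀ w, HasDerivAt f (f' w) w)
    (z : ℂ) (s : ℝ) :
    HasDerivAt (fun t : ℝ => exp (-(t * z) / 2) * f (t * z))
      (z * (exp (-(s * z) / 2) * (f' (s * z) - f (s * z) / 2))) s := by
  have hdamped : HasDerivAt (fun w => exp (-w / 2) * f w)
      (exp (-(s * z) / 2) * (f' (s * z) - f (s * z) / 2)) (s * z) :=
    (((hasDerivAt_id _).neg.div_const 2).cexp.mul (hf _)).congr_deriv (by ring)
  have hray := (hdamped.comp (s : ℂ) ((hasDerivAt_id (s : ℂ)).mul_const z)).comp_ofReal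
  exact hray.congr_deriv (by ring)

noncomputable def kummerRay (a b z : ℂ) (s : ℝ) : ℂ :=
  exp (-(s * z) / 2) * kummerPhi a b (s * z)

section KummerRay

variable (a : ℂ) {b : ℝ} (z : ℂ)

lemma hasDerivAt_kummerRay (hb : 0 < b) (s : ℝ) :
    HasDerivAt (kummerRay a b z) (z * (exp (-(s * z) / 2) *
      (deriv (kummerPhi a b) (s * z) - kummerPhi a b (s * z) / 2))) s :=
  hasDerivAt_exp_mul_comp_ofReal_mul (fun w => (differentiable_kummerPhi a hb w).hasDerivAt) z s

lemma hasDerivAt_deriv_kummerRay (hb : 0 < b) (s : ℝ) :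
    HasDerivAt (deriv (kummerRay a b z)) (z * (z * (exp (-(s * z) / 2) *
      (deriv (deriv (kummerPhi a b)) (s * z) - deriv (kummerPhi a b) (s * z)
        + kummerPhi a b (s * z) / 4)))) s := by
  rw [show deriv (kummerRay a b z) = _ from
    funext fun s => (hasDerivAt_kummerRay a z hb s).deriv]
  refine ((hasDerivAt_exp_mul_comp_ofReal_mul (fun w =>
    (differentiable_deriv_kummerPhi a hb w).hasDerivAt.sub
      ((differentiable_kummerPhi a hb w).hasDerivAt.div_const 2)) z s).const_mul z).congr_deriv ?_
  simp only [Pi.sub_apply]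
  ring

theorem differentiable_kummerRay (hb : 0 < b) : Differentiable ℝ (kummerRay a b z) :=
  fun s => (hasDerivAt_kummerRay a z hb s).differentiableAt

theorem differentiable_deriv_kummerRay (hb : 0 < b) :
    Differentiable ℝ (deriv (kummerRay a b z)) :=
  fun s => (hasDerivAt_deriv_kummerRay a z hb s).differentiableAt

theorem kummerRay_ode (hb : 0 < b) (s : ℝ) :
    s * deriv (deriv (kummerRay a b z)) s + b * deriv (kummerRay a b z) s =
      (z ^ 2 * s / 4 + (a - b / 2) * z) * kummerRay a b z s := by
  rw [(hasDerivAt_deriv_kummerRay a z hb s).deriv, (hasDerivAt_kummerRay a z hb s).deriv,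
    kummerRay]
  linear_combination z * exp (-(s * z) / 2) * kummerPhi_ode a hb (s * z)

end KummerRay

-- The function is `U' Ū` for `U = s^{b/2} u`, and the derivative is `U'' Ū + |U'|²`.
lemma hasDerivAt_lagrange {u : ℝ → ℂ} (b : ℝ) {s : ℝ} (hs : 0 < s)
    (hu : DifferentiableAt ℝ u s) (hu' : DifferentiableAt ℝ (deriv u) s) :
    HasDerivAt
      (fun t : ℝ => ((t ^ (b - 1) : ℝ) : ℂ) * ((b / 2 * u t + t * deriv u t) * conj (u t)))
      (((s ^ (b - 2) : ℝ) : ℂ) * ((b * (b - 2) / 4 * u s + s * (s * deriv (deriv u) s +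
        b * deriv u s)) * conj (u s) + normSq (b / 2 * u s + s * deriv u s))) s := by
  have hpow : HasDerivAt (fun t : ℝ => ((t ^ (b - 1) : ℝ) : ℂ))
      (((b - 1) * s ^ (b - 2) : ℝ) : ℂ) s := by
    have h := Real.hasDerivAt_rpow_const (p := b - 1) (Or.inl hs.ne')
    rw [show b - 1 - 1 = b - 2 by ring] at h
    exact h.ofReal_comp
  have hid : HasDerivAt (fun t : ℝ => (t : ℂ)) 1 s := (hasDerivAt_id s).ofReal_comp
  have hG := (hu.hasDerivAt.const_mul ((b : ℂ) / 2)).add (hid.mul hu'.hasDerivAt)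
  have h := hpow.mul (hG.mul hu.hasDerivAt.star)
  refine h.congr_deriv ?_
  have hs1 : s ^ (b - 1) = s ^ (b - 2) * s := by
    rw [← Real.rpow_add_one hs.ne']; ring_nf
  rw [← Complex.mul_conj, hs1]
  simp only [Pi.mul_apply, Pi.add_apply, Complex.star_def, map_add, map_mul, Complex.conj_ofReal,
    map_div₀, map_ofNat]
  push_cast
  ring

lemma re_I_mul_conj_mul (z : ℂ) (A B C : ℝ) :
    (I * conj z * (A + z ^ 2 * B + z * C)).re = z.im * (A - normSq z * B) := by
  simp only [mul_re, mul_im, add_re, add_im, sq, I_re, I_im, conj_re, conj_im, ofReal_re,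
    ofReal_im, normSq_apply]
  ring

noncomputable def rayIntegrand (u : ℝ → ℂ) (b : ℝ) (z : ℂ) (s : ℝ) : ℝ :=
  s ^ (b - 2) * ((b * (b - 2) - normSq z * s ^ 2) * normSq (u s) +
    4 * normSq (b / 2 * u s + s * deriv u s))

section RayIntegrand

variable {u : ℝ → ℂ} {b : ℝ} {z : ℂ}

lemma continuous_rayIntegrand (hb : 2 ≤ b) (hu : Continuous u) (hu' : Continuous (deriv u)) :
    Continuous (rayIntegrand u b z) := by
  have := Real.continuous_rpow_const (by linarith : 0 ≤ b - 2)
  unfold rayIntegrand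
  fun_prop

theorem integral_rayIntegrand_eq_zero {α : ℝ} (hb : 2 ≤ b) (hz : z.im ≠ 0)
    (hu : Differentiable ℝ u) (hu' : Differentiable ℝ (deriv u))
    (hode : ∀ s : ℝ, s * deriv (deriv u) s + b * deriv u s = (z ^ 2 * s / 4 + α * z) * u s)
    (hu1 : u 1 = 0) :
    ∫ s in (0 : ℝ)..1, rayIntegrand u b z s = 0 := by
  set g : ℝ → ℂ :=
    fun t => ((t ^ (b - 1) : ℝ) : ℂ) * ((b / 2 * u t + t * deriv u t) * conj (u t))
  have hderiv : ∀ s ∈ Set.Ioo (0 : ℝ) 1,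
      HasDerivAt (fun t => (I * conj z * g t).re) (z.im / 4 * rayIntegrand u b z s) s := by
    intro s hs
    refine (reCLM.hasFDerivAt.comp_hasDerivAt s
      ((hasDerivAt_lagrange b hs.1 (hu s) (hu' s)).const_mul (I * conj z))).congr_deriv ?_
    have hform : ((s ^ (b - 2) : ℝ) : ℂ) * ((b * (b - 2) / 4 * u s +
        s * (s * deriv (deriv u) s + b * deriv u s)) * conj (u s) +
          normSq (b / 2 * u s + s * deriv u s)) =
        ((s ^ (b - 2) * (b * (b - 2) / 4 * normSq (u s) +
          normSq (b / 2 * u s + s * deriv u s)) : ℝ) : ℂ) +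
        z ^ 2 * ((s ^ (b - 2) * (s ^ 2 / 4 * normSq (u s)) : ℝ) : ℂ) +
        z * ((s ^ (b - 2) * (α * s * normSq (u s)) : ℝ) : ℂ) := by
      rw [hode s]
      push_cast
      linear_combination ((s ^ (b - 2) : ℝ) : ℂ) *
        (b * (b - 2) / 4 + s * (z ^ 2 * s / 4 + α * z)) * mul_conj (u s)
    rw [reCLM_apply, hform, re_I_mul_conj_mul, rayIntegrand]
    ring
  have hcont : ContinuousOn (fun t => (I * conj z * g t).re) (Set.Icc 0 1) := by
    have := Real.continuous_rpow_const (by linarith : 0 ≤ b - 1)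
    have := hu.continuous
    have := hu'.continuous
    fun_prop
  have hint : IntervalIntegrable (fun s => z.im / 4 * rayIntegrand u b z s)
      MeasureTheory.volume 0 1 :=
    ((continuous_rayIntegrand hb hu.continuous hu'.continuous).const_mul _).intervalIntegrable 0 1
  have hftc := intervalIntegral.integral_eq_sub_of_hasDerivAt_of_le zero_le_one hcont hderiv hint
  have hg0 : g 0 = 0 := by simp [g, Real.zero_rpow (by linarith : b - 1 ≠ 0)]
  have hg1 : g 1 = 0 := by simp [g, hu1]
  rw [intervalIntegral.integral_const_mul, hg0, hg1] at hftc
  simpa [hz] using hftc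

theorem integral_rayIntegrand_pos (hb : 2 ≤ b) (hu : Continuous u) (hu' : Continuous (deriv u))
    (hu0 : u 0 ≠ 0) (hzb : normSq z ≤ b * (b - 2)) :
    0 < ∫ s in (0 : ℝ)..1, rayIntegrand u b z s := by
  have hG : Continuous fun t : ℝ => b / 2 * u t + t * deriv u t := by fun_prop
  have hG0 : (b : ℂ) / 2 * u 0 + (0 : ℝ) * deriv u 0 ≠ 0 := by
    have : (b : ℂ) ≠ 0 := by exact_mod_cast (by linarith : b ≠ 0)
    simpa [this] using hu0
  obtain ⟨c, hGc, hc⟩ :=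
    (((hG.continuousAt.eventually_ne hG0).filter_mono nhdsWithin_le_nhds).and
      (Ioc_mem_nhdsGT zero_lt_one)).exists
  have hbound : ∀ s ∈ Set.Icc (0 : ℝ) 1, 0 ≤ b * (b - 2) - normSq z * s ^ 2 := fun s hs => by
    nlinarith [normSq_nonneg z, pow_le_one₀ hs.1 hs.2 (n := 2), sq_nonneg s]
  have hpos : (∫ _ in (0 : ℝ)..1, (0 : ℝ)) < ∫ s in (0 : ℝ)..1, rayIntegrand u b z s := by
    refine intervalIntegral.integral_lt_integral_of_continuousOn_of_le_of_exists_lt zero_lt_one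
      continuousOn_const (continuous_rayIntegrand hb hu hu').continuousOn (fun s hs => ?_)
      ⟨c, Set.Ioc_subset_Icc_self hc, ?_⟩
    · exact mul_nonneg (Real.rpow_nonneg hs.1.le _) (add_nonneg
        (mul_nonneg (hbound s (Set.Ioc_subset_Icc_self hs)) (normSq_nonneg _))
        (mul_nonneg zero_le_four (normSq_nonneg _)))
    · exact mul_pos (Real.rpow_pos_of_pos hc.1 _) (add_pos_of_nonneg_of_pos
        (mul_nonneg (hbound c (Set.Ioc_subset_Icc_self hc)) (normSq_nonneg _))
        (mul_pos four_pos (normSq_pos.2 hGc)))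
  simpa using hpos

end RayIntegrand

theorem kummer_nonreal_roots_modulus (a b : ℝ) (hb : 2 ≤ b) (z : ℂ) (hz : z.im ≠ 0)
    (h : kummerPhi a b z = 0) : Real.sqrt (b * (b - 2)) < ‖z‖ := by
  have hb0 : 0 < b := by linarith
  have hz0 : 0 < ‖z‖ := norm_pos_iff.2 fun h0 => hz (by simp [h0])
  rw [Real.sqrt_lt' hz0, Complex.sq_norm]
  by_contra! hle
  have hu := differentiable_kummerRay a z hb0
  have hu' := differentiable_deriv_kummerRay a z hb0
  have hzero := integral_rayIntegrand_eq_zero (α := a - b / 2) hb hz hu hu'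
    (fun s => by push_cast; exact kummerRay_ode a z hb0 s) (by simp [kummerRay, h])
  have hpos := integral_rayIntegrand_pos hb hu.continuous hu'.continuous
    (by simp [kummerRay, kummerPhi_zero]) hle
  linarith
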